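/- Let G be a Tutte-Berge simple graph and U ⊆ V(G); let G₁, G₂ be the induced subgraphs on U and V(G)\U. If there is a maximum matching M of G partitioned as M = M₁ ∪ M₂ with M₁ contained in G₁ and M₂ contained in G₂, then both G₁ and G₂ are Tutte-Berge. -/

import Mathlib

open Finset

namespace TB

variable {V W : Type*}

/-- A matching of `G` given as a finite set of edges: each element is an edge of `G`
and no two distinct edges share a vertex. -/
def IsMatching (G : SimpleGraph V) (M : Finset (Sym2 V)) : Prop :=
  (∀ e ∈ M, e ∈ G.edgeSet) ∧
    ∀ e ∈ M, ∀ f ∈ M, e ≠ f → ∀ v : V, v ∈ e → v ∉ f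

/-- A perfect matching: a matching covering every vertex. -/
def IsPerfectMatching (G : SimpleGraph V) (M : Finset (Sym2 V)) : Prop :=
  IsMatching G M ∧ ∀ v : V, ∃ e ∈ M, v ∈ e

/-- The matching number `mat(G)`: the maximum size of a matching of `G`. -/
noncomputable def matchingNumber (G : SimpleGraph V) [Fintype V] : ℕ := by
  classical
  exact Finset.univ.powerset.sup fun M => if IsMatching G M then M.card else 0

/-- `T` is an independent set of `G`. -/
def IsIndepSet (G : SimpleGraph V) (T : Finset V) : Prop :=
  ∀ u ∈ T, ∀ v ∈ T, ¬ G.Adj u v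

/-- The neighborhood `N_G(T)` of a set of vertices `T`. -/
noncomputable def nbrSet (G : SimpleGraph V) [Fintype V] (T : Finset V) : Finset V := by
  classical
  exact Finset.univ.filter fun v => ∃ t ∈ T, G.Adj t v

/-- `G` is a Tutte-Berge graph: some independent set `T` satisfies
`|T| = |N_G(T)| + |V(G)| - 2 mat(G)` (written additively to avoid truncated subtraction). -/
noncomputable def TutteBerge (G : SimpleGraph V) [Fintype V] : Prop :=
  ∃ T : Finset V, IsIndepSet G T ∧
    T.card + 2 * matchingNumber G = (nbrSet G T).card + Fintype.card V

/-- `G` is factor-critical: deleting any vertex leaves a graph with a perfect matching. -/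
def FactorCritical (G : SimpleGraph V) : Prop :=
  ∀ v : V, ∃ M, IsPerfectMatching (G.induce {x | x ≠ v}) M

/-- The Gallai-Edmonds set `D(G)`: vertices missed by at least one maximum matching. -/
noncomputable def gallaiD (G : SimpleGraph V) [Fintype V] : Finset V := by
  classical
  exact Finset.univ.filter fun v =>
    ∃ M, IsMatching G M ∧ M.card = matchingNumber G ∧ ∀ e ∈ M, v ∉ e

/-- The cone `G*` over `G`: a new apex vertex (`none`) joined to every vertex of `G`. -/
def cone (G : SimpleGraph V) : SimpleGraph (Option V) :=
  SimpleGraph.fromRel fun a b =>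
    a = none ∨ ∃ u v, a = some u ∧ b = some v ∧ G.Adj u v

/-- The edge polytope `P_H`: convex hull of the points `e_u + e_v` over edges `{u,v}` of `H`. -/
noncomputable def edgePolytope (H : SimpleGraph W) : Set (W → ℝ) := by
  classical
  exact convexHull ℝ
    {x | ∃ u v, H.Adj u v ∧
      x = fun w => (if w = u then (1 : ℝ) else 0) + (if w = v then (1 : ℝ) else 0)}

/-- Every connected component of `H` contains an odd cycle. -/
def HasOddCycleComponents (H : SimpleGraph W) : Prop :=
  ∀ c : H.ConnectedComponent, ∃ u, u ∈ c.supp ∧ ∃ p : H.Walk u u, p.IsCycle ∧ Odd p.length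

/-- The neighborhood of a set of vertices, as a set. -/
def nbrSetSet (H : SimpleGraph W) (T : Set W) : Set W := {w | ∃ t ∈ T, H.Adj t w}

/-- The bipartite graph `B_H(T)` induced by `T`: vertex set `T ∪ N_H(T)`,
with the edges of `H` joining a vertex of `T` to a vertex of `N_H(T)`. -/
def inducedBipartite (H : SimpleGraph W) (T : Set W) :
    SimpleGraph ↥(T ∪ nbrSetSet H T) :=
  SimpleGraph.fromRel fun a b => (a : W) ∈ T ∧ H.Adj a b

/-- An independent set `T` is fundamental in `H` if `B_H(T)` is connected (trivially so
if empty) and, when `T ∪ N_H(T) ≠ V(H)`, each connected component of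
`H \ (T ∪ N_H(T))` contains an odd cycle. -/
def Fundamental (H : SimpleGraph W) (T : Set W) : Prop :=
  (∀ u ∈ T, ∀ v ∈ T, ¬ H.Adj u v) ∧
  (inducedBipartite H T).Preconnected ∧
  (T ∪ nbrSetSet H T ≠ Set.univ →
    HasOddCycleComponents (H.induce (T ∪ nbrSetSet H T)ᶜ))



section Aux

variable {V' : Type*}

lemma mem_nbrSet [Fintype V'] {G : SimpleGraph V'} {T : Finset V'} {v : V'} :
    v ∈ nbrSet G T ↔ ∃ t ∈ T, G.Adj t v := by
  classical
  simp [nbrSet]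

lemma isMatching_empty (G : SimpleGraph V') : IsMatching G ∅ := by
  constructor <;> simp

lemma card_le_matchingNumber [Fintype V'] {G : SimpleGraph V'} {M : Finset (Sym2 V')}
    (h : IsMatching G M) : M.card ≤ matchingNumber G := by
  classical
  have hmem : M ∈ (Finset.univ : Finset (Sym2 V')).powerset := by simp
  have := Finset.le_sup (f := fun M => if IsMatching G M then M.card else 0) hmem
  simpa [matchingNumber, h] using this

lemma exists_max_matching [Fintype V'] (G : SimpleGraph V') :
    ∃ M, IsMatching G M ∧ M.card = matchingNumber G := by
  classical
  obtain ⟨M, hM, hEq⟩ := Finset.exists_mem_eq_sup (Finset.univ : Finset (Sym2 V')).powerset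
    (by simp) (fun M => if IsMatching G M then M.card else 0)
  by_cases h : IsMatching G M
  · exact ⟨M, h, by rw [matchingNumber, hEq, if_pos h]⟩
  · refine ⟨∅, isMatching_empty G, ?_⟩
    rw [matchingNumber, hEq, if_neg h]; simp

lemma sym2_exists_mem (e : Sym2 V') : ∃ v, v ∈ e := by
  induction e using Sym2.ind with
  | _ u v => exact ⟨u, by simp⟩

lemma card_filter_mem_eq_two [Fintype V'] [DecidableEq V'] {G : SimpleGraph V'} {e : Sym2 V'}
    (he : e ∈ G.edgeSet) : (Finset.univ.filter (· ∈ e)).card = 2 := by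
  induction e using Sym2.ind with
  | _ u v =>
    have hadj : G.Adj u v := he
    have huv : u ≠ v := hadj.ne
    have : Finset.univ.filter (· ∈ s(u, v)) = {u, v} := by
      ext w; simp [Sym2.mem_iff]
    rw [this, Finset.card_insert_of_notMem (by simp [huv]), Finset.card_singleton]

/-- The key counting bound: for any independent set and any matching. -/
lemma indep_matching_bound [Fintype V'] [DecidableEq V'] (G : SimpleGraph V') (T : Finset V')
    (hT : IsIndepSet G T) (M : Finset (Sym2 V')) (hM : IsMatching G M) :
    T.card + 2 * M.card ≤ (nbrSet G T).card + Fintype.card V' := by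
  classical
  set A := M.filter (fun e => ∃ t ∈ T, t ∈ e) with hAdef
  set B := M.filter (fun e => ¬ ∃ t ∈ T, t ∈ e) with hBdef
  have hABcard : A.card + B.card = M.card :=
    Finset.card_filter_add_card_filter_not _
  have hAM : ∀ e ∈ A, e ∈ M := fun e he => (Finset.mem_filter.1 he).1
  have hBM : ∀ e ∈ B, e ∈ M := fun e he => (Finset.mem_filter.1 he).1
  have hAB : ∀ e ∈ A, e ∉ B := by
    intro e heA heB
    exact (Finset.mem_filter.1 heB).2 (Finset.mem_filter.1 heA).2
  have hP : ∀ e ∈ A, ∃ w, w ∈ e ∧ w ∉ T ∧ w ∈ nbrSet G T := by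
    intro e he
    obtain ⟨t, htT, hte⟩ := (Finset.mem_filter.1 he).2
    obtain ⟨w, rfl⟩ := Sym2.mem_iff_exists.1 hte
    have hadj : G.Adj t w := hM.1 _ (hAM _ he)
    have hwT : w ∉ T := fun hw => hT t htT w hw hadj
    exact ⟨w, by simp [Sym2.mem_iff], hwT, mem_nbrSet.2 ⟨t, htT, hadj⟩⟩
  let g : Sym2 V' → V' := fun e =>
    if h : ∃ w, w ∈ e ∧ w ∉ T ∧ w ∈ nbrSet G T then h.choose
    else (sym2_exists_mem e).choose
  have hg : ∀ e ∈ A, g e ∈ e ∧ g e ∉ T ∧ g e ∈ nbrSet G T := by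
    intro e he
    have h := hP e he
    simp only [g, dif_pos h]
    exact h.choose_spec
  set Bcov := Finset.univ.filter (fun v => ∃ e ∈ B, v ∈ e) with hBcov
  set gA := A.image g with hgA
  have hBcovCard : Bcov.card = 2 * B.card := by
    have hbi : Bcov = B.biUnion (fun e => Finset.univ.filter (· ∈ e)) := by
      ext v; simp [hBcov, Finset.mem_biUnion]
    rw [hbi, Finset.card_biUnion]
    · rw [Finset.sum_congr rfl (fun e he => card_filter_mem_eq_two (hM.1 _ (hBM _ he)))]
      simp [mul_comm]
    · intro e he f hf hef
      rw [Function.onFun, Finset.disjoint_left]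
      intro v hv hv'
      exact hM.2 e (hBM _ he) f (hBM _ hf) hef v (Finset.mem_filter.1 hv).2
        (Finset.mem_filter.1 hv').2
  have hgAcard : gA.card = A.card := by
    rw [hgA]
    apply Finset.card_image_of_injOn
    intro e he f hf hgef
    by_contra hef
    exact hM.2 e (hAM _ he) f (hAM _ hf) hef (g e) (hg e he).1 (hgef ▸ (hg f hf).1)
  have hdisj1 : Disjoint T Bcov := by
    rw [Finset.disjoint_left]
    intro v hvT hvB
    obtain ⟨e, heB, hve⟩ := (Finset.mem_filter.1 hvB).2
    exact (Finset.mem_filter.1 heB).2 ⟨v, hvT, hve⟩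
  have hdisj2 : Disjoint T gA := by
    rw [Finset.disjoint_left]
    intro v hvT hvg
    obtain ⟨e, he, rfl⟩ := Finset.mem_image.1 hvg
    exact (hg e he).2.1 hvT
  have hdisj3 : Disjoint Bcov gA := by
    rw [Finset.disjoint_left]
    intro v hvB hvg
    obtain ⟨e, he, rfl⟩ := Finset.mem_image.1 hvg
    obtain ⟨f, hfB, hvf⟩ := (Finset.mem_filter.1 hvB).2
    have hef : e ≠ f := fun h => hAB e he (h ▸ hfB)
    exact hM.2 e (hAM _ he) f (hBM _ hfB) hef (g e) (hg e he).1 hvf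
  have hcard3 : T.card + Bcov.card + gA.card ≤ Fintype.card V' := by
    have h1 : (T ∪ Bcov ∪ gA).card = T.card + Bcov.card + gA.card := by
      rw [Finset.card_union_of_disjoint, Finset.card_union_of_disjoint hdisj1]
      rw [Finset.disjoint_union_left]
      exact ⟨hdisj2, hdisj3⟩
    calc T.card + Bcov.card + gA.card = (T ∪ Bcov ∪ gA).card := h1.symm
      _ ≤ Fintype.card V' := by simpa using Finset.card_le_univ _
  have hgAsub : gA.card ≤ (nbrSet G T).card := by
    apply Finset.card_le_card
    intro v hv
    obtain ⟨e, he, rfl⟩ := Finset.mem_image.1 hv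
    exact (hg e he).2.2
  omega

lemma matchingNumber_bound [Fintype V'] [DecidableEq V'] (G : SimpleGraph V') (T : Finset V')
    (hT : IsIndepSet G T) :
    T.card + 2 * matchingNumber G ≤ (nbrSet G T).card + Fintype.card V' := by
  obtain ⟨M, hM, hc⟩ := exists_max_matching G
  rw [← hc]
  exact indep_matching_bound G T hT M hM

/-- The embedding of `Sym2 ↥S` into `Sym2 V'`. -/
noncomputable def symEmb (S : Set V') : Sym2 ↥S ↪ Sym2 V' :=
  ⟨Sym2.map Subtype.val, Sym2.map.injective Subtype.val_injective⟩

lemma mem_symEmb {S : Set V'} {e : Sym2 ↥S} {v : V'} :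
    v ∈ symEmb S e ↔ ∃ a ∈ e, (a : V') = v := by
  simp [symEmb, Sym2.mem_map]

lemma symEmb_edge (G : SimpleGraph V') {S : Set V'} {e : Sym2 ↥S} :
    e ∈ (G.induce S).edgeSet ↔ (symEmb S e ∈ G.edgeSet) := by
  induction e using Sym2.ind with
  | _ a b => simp [symEmb, SimpleGraph.mem_edgeSet]

/-- Pushing a matching of the induced graph forward. -/
lemma push_matching (G : SimpleGraph V') (S : Set V') {M' : Finset (Sym2 ↥S)}
    (hM' : IsMatching (G.induce S) M') :
    IsMatching G (M'.map (symEmb S)) ∧ (M'.map (symEmb S)).card = M'.card ∧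
      ∀ e ∈ M'.map (symEmb S), ∀ v : V', v ∈ e → v ∈ S := by
  refine ⟨⟨?_, ?_⟩, Finset.card_map _, ?_⟩
  · intro e he
    obtain ⟨e', he', rfl⟩ := Finset.mem_map.1 he
    exact (symEmb_edge G).1 (hM'.1 _ he')
  · intro e he f hf hef v hve hvf
    obtain ⟨e', he', rfl⟩ := Finset.mem_map.1 he
    obtain ⟨f', hf', rfl⟩ := Finset.mem_map.1 hf
    obtain ⟨a, hae, hav⟩ := mem_symEmb.1 hve
    obtain ⟨b, hbf, hbv⟩ := mem_symEmb.1 hvf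
    have hab : a = b := Subtype.val_injective (hav.trans hbv.symm)
    have he'f' : e' ≠ f' := fun h => hef (by rw [h])
    exact hM'.2 e' he' f' hf' he'f' a hae (hab ▸ hbf)
  · intro e he v hve
    obtain ⟨e', he', rfl⟩ := Finset.mem_map.1 he
    obtain ⟨a, _, rfl⟩ := mem_symEmb.1 hve
    exact a.2

/-- Pulling back a matching of `G` whose vertices all lie in `S`. -/
lemma pull_matching (G : SimpleGraph V') (S : Set V') {N : Finset (Sym2 V')}
    (hN : IsMatching G N) (hNS : ∀ e ∈ N, ∀ v : V', v ∈ e → v ∈ S) :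
    ∃ N' : Finset (Sym2 ↥S), IsMatching (G.induce S) N' ∧ N'.card = N.card := by
  classical
  have hrange : ∀ e ∈ N, ∃ e' : Sym2 ↥S, symEmb S e' = e := by
    intro e he
    induction e using Sym2.ind with
    | _ u v =>
      have hu : u ∈ S := hNS _ he u (by simp)
      have hv : v ∈ S := hNS _ he v (by simp [Sym2.mem_iff])
      exact ⟨s(⟨u, hu⟩, ⟨v, hv⟩), by simp [symEmb]⟩
  set N' : Finset (Sym2 ↥S) := N.attach.image (fun e => (hrange e.1 e.2).choose) with hN'def
  have him : ∀ e' ∈ N', symEmb S e' ∈ N := by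
    intro e' he'
    obtain ⟨e, _, rfl⟩ := Finset.mem_image.1 he'
    rw [(hrange e.1 e.2).choose_spec]; exact e.2
  refine ⟨N', ⟨?_, ?_⟩, ?_⟩
  · intro e' he'
    exact (symEmb_edge G).2 (hN.1 _ (him _ he'))
  · intro e' he' f' hf' hef a hae haf
    have : symEmb S e' ≠ symEmb S f' := fun h => hef ((symEmb S).injective h)
    exact hN.2 _ (him _ he') _ (him _ hf') this (a : V')
      (mem_symEmb.2 ⟨a, hae, rfl⟩) (mem_symEmb.2 ⟨a, haf, rfl⟩)
  · have heq : N'.map (symEmb S) = N := by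
      apply Finset.eq_of_subset_of_card_le
      · intro e he
        obtain ⟨e', he', rfl⟩ := Finset.mem_map.1 he
        exact him _ he'
      · rw [Finset.card_map]
        apply Finset.card_le_card_of_surjOn (fun e' => symEmb S e')
        intro e he
        obtain ⟨e', hspec⟩ := hrange e he
        refine ⟨e', ?_, hspec⟩
        simp only [hN'def, Finset.coe_image, Set.mem_image]
        refine ⟨⟨e, he⟩, by simp [Finset.mem_coe], ?_⟩
        exact (symEmb S).injective ((hrange e he).choose_spec.trans hspec.symm)
    calc N'.card = (N'.map (symEmb S)).card := (Finset.card_map _).symm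
      _ = N.card := by rw [heq]

end Aux

/-- if `G` is Tutte-Berge and a maximum matching of `G` splits into a matching
inside the induced subgraph `G₁` on `U` and a matching inside the induced subgraph `G₂` on
the complement of `U`, then both `G₁` and `G₂` are Tutte-Berge. -/
theorem tutteBerge_of_split {V : Type*} [Fintype V] [DecidableEq V]
    (G : SimpleGraph V) (hG : TutteBerge G) (U : Finset V) (M M₁ M₂ : Finset (Sym2 V))
    (hM : IsMatching G M) (hmax : M.card = matchingNumber G)
    (hpart : M = M₁ ∪ M₂) (hdisj : Disjoint M₁ M₂)
    (h1 : ∀ e ∈ M₁, ∀ v : V, v ∈ e → v ∈ U)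
    (h2 : ∀ e ∈ M₂, ∀ v : V, v ∈ e → v ∉ U) :
    TutteBerge (G.induce (U : Set V)) ∧ TutteBerge (G.induce ((U : Set V)ᶜ)) := by
  classical
  obtain ⟨T, hTind, hTeq⟩ := hG
  have hS₁mem : ∀ v : V, v ∈ (U : Set V) ↔ v ∈ U := fun v => Finset.mem_coe
  have hS₂mem : ∀ v : V, v ∈ ((U : Set V))ᶜ ↔ v ∉ U := fun v => by simp
  have hM₁sub : M₁ ⊆ M := hpart ▸ Finset.subset_union_left
  have hM₂sub : M₂ ⊆ M := hpart ▸ Finset.subset_union_right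
  have hM₁ : IsMatching G M₁ :=
    ⟨fun e he => hM.1 e (hM₁sub he),
     fun e he f hf hef => hM.2 e (hM₁sub he) f (hM₁sub hf) hef⟩
  have hM₂ : IsMatching G M₂ :=
    ⟨fun e he => hM.1 e (hM₂sub he),
     fun e he f hf hef => hM.2 e (hM₂sub he) f (hM₂sub hf) hef⟩
  have hMcard : M.card = M₁.card + M₂.card := by
    rw [hpart, Finset.card_union_of_disjoint hdisj]
  -- matching numbers of the induced graphs
  have hm1le : M₁.card ≤ matchingNumber (G.induce (U : Set V)) := by
    obtain ⟨N', hN', hcard⟩ :=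
      pull_matching G (U : Set V) hM₁ (fun e he v hv => (hS₁mem v).2 (h1 e he v hv))
    exact hcard ▸ card_le_matchingNumber hN'
  have hm2le : M₂.card ≤ matchingNumber (G.induce ((U : Set V))ᶜ) := by
    obtain ⟨N', hN', hcard⟩ :=
      pull_matching G ((U : Set V))ᶜ hM₂ (fun e he v hv => (hS₂mem v).2 (h2 e he v hv))
    exact hcard ▸ card_le_matchingNumber hN'
  have hm1ge : matchingNumber (G.induce (U : Set V)) ≤ M₁.card := by
    obtain ⟨P, hP, hPcard⟩ := exists_max_matching (G.induce (U : Set V))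
    obtain ⟨hPm, hPc, hPS⟩ := push_matching G (U : Set V) hP
    set Q := P.map (symEmb (U : Set V)) with hQ
    have hQM₂ : Disjoint Q M₂ := by
      rw [Finset.disjoint_left]; intro e heQ heM₂
      obtain ⟨v, hv⟩ := sym2_exists_mem e
      exact h2 e heM₂ v hv ((hS₁mem v).1 (hPS e heQ v hv))
    have hunion : IsMatching G (Q ∪ M₂) := by
      constructor
      · intro e he
        rcases Finset.mem_union.1 he with h | h
        · exact hPm.1 e h
        · exact hM₂.1 e h
      · intro e he f hf hef v hve hvf
        rcases Finset.mem_union.1 he with he' | he' <;>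
          rcases Finset.mem_union.1 hf with hf' | hf'
        · exact hPm.2 e he' f hf' hef v hve hvf
        · exact h2 f hf' v hvf ((hS₁mem v).1 (hPS e he' v hve))
        · exact h2 e he' v hve ((hS₁mem v).1 (hPS f hf' v hvf))
        · exact hM₂.2 e he' f hf' hef v hve hvf
    have hle := card_le_matchingNumber hunion
    rw [Finset.card_union_of_disjoint hQM₂, ← hmax, hMcard] at hle
    omega
  have hm2ge : matchingNumber (G.induce ((U : Set V))ᶜ) ≤ M₂.card := by
    obtain ⟨P, hP, hPcard⟩ := exists_max_matching (G.induce ((U : Set V))ᶜ)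
    obtain ⟨hPm, hPc, hPS⟩ := push_matching G ((U : Set V))ᶜ hP
    set Q := P.map (symEmb ((U : Set V))ᶜ) with hQ
    have hQM₁ : Disjoint Q M₁ := by
      rw [Finset.disjoint_left]; intro e heQ heM₁
      obtain ⟨v, hv⟩ := sym2_exists_mem e
      exact (hS₂mem v).1 (hPS e heQ v hv) (h1 e heM₁ v hv)
    have hunion : IsMatching G (Q ∪ M₁) := by
      constructor
      · intro e he
        rcases Finset.mem_union.1 he with h | h
        · exact hPm.1 e h
        · exact hM₁.1 e h
      · intro e he f hf hef v hve hvf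
        rcases Finset.mem_union.1 he with he' | he' <;>
          rcases Finset.mem_union.1 hf with hf' | hf'
        · exact hPm.2 e he' f hf' hef v hve hvf
        · exact (hS₂mem v).1 (hPS e he' v hve) (h1 f hf' v hvf)
        · exact (hS₂mem v).1 (hPS f hf' v hvf) (h1 e he' v hve)
        · exact hM₁.2 e he' f hf' hef v hve hvf
    have hle := card_le_matchingNumber hunion
    rw [Finset.card_union_of_disjoint hQM₁, ← hmax, hMcard] at hle
    omega
  have hm1 : matchingNumber (G.induce (U : Set V)) = M₁.card := le_antisymm hm1ge hm1le
  have hm2 : matchingNumber (G.induce ((U : Set V))ᶜ) = M₂.card := le_antisymm hm2ge hm2le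
  -- the candidate independent sets
  set T₁ : Finset ↥(U : Set V) := Finset.univ.filter (fun x => (x : V) ∈ T) with hT₁def
  set T₂ : Finset ↥((U : Set V))ᶜ := Finset.univ.filter (fun x => (x : V) ∈ T) with hT₂def
  have hT₁mem : ∀ x : ↥(U : Set V), x ∈ T₁ ↔ (x : V) ∈ T := by
    intro x; simp [hT₁def]
  have hT₂mem : ∀ x : ↥((U : Set V))ᶜ, x ∈ T₂ ↔ (x : V) ∈ T := by
    intro x; simp [hT₂def]
  have hT₁ind : IsIndepSet (G.induce (U : Set V)) T₁ := by
    intro a ha b hb hadj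
    exact hTind a ((hT₁mem a).1 ha) b ((hT₁mem b).1 hb) hadj
  have hT₂ind : IsIndepSet (G.induce ((U : Set V))ᶜ) T₂ := by
    intro a ha b hb hadj
    exact hTind a ((hT₂mem a).1 ha) b ((hT₂mem b).1 hb) hadj
  -- cardinalities of T₁, T₂
  have hT₁card : T₁.card = (T.filter (· ∈ U)).card := by
    have hmapeq : T₁.map ⟨Subtype.val, Subtype.val_injective⟩ = T.filter (· ∈ U) := by
      ext v
      simp only [Finset.mem_map, Finset.mem_filter, Function.Embedding.coeFn_mk]
      constructor
      · rintro ⟨a, ha, rfl⟩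
        exact ⟨(hT₁mem a).1 ha, (hS₁mem _).1 a.2⟩
      · rintro ⟨hvT, hvU⟩
        exact ⟨⟨v, (hS₁mem v).2 hvU⟩, (hT₁mem _).2 hvT, rfl⟩
    calc T₁.card = (T₁.map ⟨Subtype.val, Subtype.val_injective⟩).card :=
          (Finset.card_map _).symm
      _ = _ := by rw [hmapeq]
  have hT₂card : T₂.card = (T.filter (· ∉ U)).card := by
    have hmapeq : T₂.map ⟨Subtype.val, Subtype.val_injective⟩ = T.filter (· ∉ U) := by
      ext v
      simp only [Finset.mem_map, Finset.mem_filter, Function.Embedding.coeFn_mk]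
      constructor
      · rintro ⟨a, ha, rfl⟩
        exact ⟨(hT₂mem a).1 ha, (hS₂mem _).1 a.2⟩
      · rintro ⟨hvT, hvU⟩
        exact ⟨⟨v, (hS₂mem v).2 hvU⟩, (hT₂mem _).2 hvT, rfl⟩
    calc T₂.card = (T₂.map ⟨Subtype.val, Subtype.val_injective⟩).card :=
          (Finset.card_map _).symm
      _ = _ := by rw [hmapeq]
  have hTsplit : (T.filter (· ∈ U)).card + (T.filter (· ∉ U)).card = T.card :=
    Finset.card_filter_add_card_filter_not _
  -- neighborhoods
  set F₁ : Finset V := (nbrSet (G.induce (U : Set V)) T₁).map ⟨Subtype.val, Subtype.val_injective⟩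
    with hF₁def
  set F₂ : Finset V := (nbrSet (G.induce ((U : Set V))ᶜ) T₂).map ⟨Subtype.val, Subtype.val_injective⟩
    with hF₂def
  have hF₁card : F₁.card = (nbrSet (G.induce (U : Set V)) T₁).card := Finset.card_map _
  have hF₂card : F₂.card = (nbrSet (G.induce ((U : Set V))ᶜ) T₂).card := Finset.card_map _
  have hF₁sub : F₁ ⊆ nbrSet G T := by
    intro v hv
    obtain ⟨x, hx, rfl⟩ := Finset.mem_map.1 hv
    obtain ⟨t, htT₁, hadj⟩ := mem_nbrSet.1 hx
    exact mem_nbrSet.2 ⟨(t : V), (hT₁mem t).1 htT₁, hadj⟩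
  have hF₂sub : F₂ ⊆ nbrSet G T := by
    intro v hv
    obtain ⟨x, hx, rfl⟩ := Finset.mem_map.1 hv
    obtain ⟨t, htT₂, hadj⟩ := mem_nbrSet.1 hx
    exact mem_nbrSet.2 ⟨(t : V), (hT₂mem t).1 htT₂, hadj⟩
  have hF₁U : ∀ v ∈ F₁, v ∈ U := by
    intro v hv
    obtain ⟨x, _, rfl⟩ := Finset.mem_map.1 hv
    exact (hS₁mem _).1 x.2
  have hF₂U : ∀ v ∈ F₂, v ∉ U := by
    intro v hv
    obtain ⟨x, _, rfl⟩ := Finset.mem_map.1 hv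
    exact (hS₂mem _).1 x.2
  have hFdisj : Disjoint F₁ F₂ := by
    rw [Finset.disjoint_left]
    intro v hv1 hv2
    exact hF₂U v hv2 (hF₁U v hv1)
  have hFsum : F₁.card + F₂.card ≤ (nbrSet G T).card := by
    rw [← Finset.card_union_of_disjoint hFdisj]
    exact Finset.card_le_card (Finset.union_subset hF₁sub hF₂sub)
  -- vertex counts
  have hcards : Fintype.card ↥(U : Set V) + Fintype.card ↥((U : Set V))ᶜ = Fintype.card V := by
    rw [← Set.toFinset_card, ← Set.toFinset_card, Set.toFinset_compl]
    exact Finset.card_add_card_compl _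
  -- the two bounds
  have hb₁ := matchingNumber_bound (G.induce (U : Set V)) T₁ hT₁ind
  have hb₂ := matchingNumber_bound (G.induce ((U : Set V))ᶜ) T₂ hT₂ind
  constructor
  · exact ⟨T₁, hT₁ind, by omega⟩
  · exact ⟨T₂, hT₂ind, by omega⟩


end TB
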